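/- Let A ∈ ℂ^{n×n}, ε > 0, and let B achieve the ε-bandwidth of A, i.e., β(ε, A) = λ(A − B) with ‖B‖ ≤ ε‖A‖. Then for any polynomial p_m of degree m, β(ε_p, p_m(A)) ≤ m·β(ε, A), where ε_p = ‖p_m(A) − p_m(A−B)‖ / ‖p_m(A)‖. -/
import Mathlib


/-- The set of index pairs where the matrix entry is nonzero. -/
def Omega {n : ℕ} (A : Matrix (Fin n) (Fin n) ℂ) : Set (Fin n × Fin n) :=
  {p | A p.1 p.2 ≠ 0}

/-- Upper bandwidth `l₁(A) = max_{a_{ij} ≠ 0} (j - i)` (max over ∅ is 0). -/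
noncomputable def l1 {n : ℕ} (A : Matrix (Fin n) (Fin n) ℂ) : ℕ :=
  Finset.sup (Finset.univ.filter fun p : Fin n × Fin n => A p.1 p.2 ≠ 0)
    fun p => p.2.val - p.1.val

/-- Lower bandwidth `l₂(A) = max_{a_{ij} ≠ 0} (i - j)` (max over ∅ is 0). -/
noncomputable def l2 {n : ℕ} (A : Matrix (Fin n) (Fin n) ℂ) : ℕ :=
  Finset.sup (Finset.univ.filter fun p : Fin n × Fin n => A p.1 p.2 ≠ 0)
    fun p => p.1.val - p.2.val

/-- Bandwidth `l(A) = l₁(A) + l₂(A)`. -/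
noncomputable def bw {n : ℕ} (A : Matrix (Fin n) (Fin n) ℂ) : ℕ := l1 A + l2 A

/-- Real bandwidth `λ(A)`: minimum bandwidth over simultaneous row/column permutations. -/
noncomputable def lam {n : ℕ} (A : Matrix (Fin n) (Fin n) ℂ) : ℕ :=
  sInf {m | ∃ σ : Equiv.Perm (Fin n), bw (A.submatrix σ σ) = m}

attribute [local instance] Matrix.frobeniusNormedAddCommGroup

/-- `ε`-bandwidth `β(ε, A)`: minimum real bandwidth of `A - B` over all `B`
with `‖B‖ ≤ ε‖A‖` (Frobenius norm). -/
noncomputable def beta {n : ℕ} (ε : ℝ) (A : Matrix (Fin n) (Fin n) ℂ) : ℕ :=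
  sInf {m | ∃ B : Matrix (Fin n) (Fin n) ℂ, ‖B‖ ≤ ε * ‖A‖ ∧ lam (A - B) = m}

lemma le_l1 {n : ℕ} {A : Matrix (Fin n) (Fin n) ℂ} {i j : Fin n} (h : A i j ≠ 0) :
    j.val - i.val ≤ l1 A :=
  Finset.le_sup (f := fun p : Fin n × Fin n => p.2.val - p.1.val)
    (Finset.mem_filter.mpr ⟨Finset.mem_univ (i, j), h⟩)

lemma le_l2 {n : ℕ} {A : Matrix (Fin n) (Fin n) ℂ} {i j : Fin n} (h : A i j ≠ 0) :
    i.val - j.val ≤ l2 A :=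
  Finset.le_sup (f := fun p : Fin n × Fin n => p.1.val - p.2.val)
    (Finset.mem_filter.mpr ⟨Finset.mem_univ (i, j), h⟩)

lemma l1_le_iff {n : ℕ} {A : Matrix (Fin n) (Fin n) ℂ} {d : ℕ} :
    l1 A ≤ d ↔ ∀ i j : Fin n, A i j ≠ 0 → j.val - i.val ≤ d := by
  simp [l1, Finset.sup_le_iff, Prod.forall]

lemma l2_le_iff {n : ℕ} {A : Matrix (Fin n) (Fin n) ℂ} {d : ℕ} :
    l2 A ≤ d ↔ ∀ i j : Fin n, A i j ≠ 0 → i.val - j.val ≤ d := by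
  simp [l2, Finset.sup_le_iff, Prod.forall]

lemma l1_mul_le {n : ℕ} (X Y : Matrix (Fin n) (Fin n) ℂ) :
    l1 (X * Y) ≤ l1 X + l1 Y := by
  rw [l1_le_iff]
  intro i j h
  have : ∃ k ∈ Finset.univ, X i k * Y k j ≠ 0 := by
    apply Finset.exists_ne_zero_of_sum_ne_zero
    simpa [Matrix.mul_apply] using h
  obtain ⟨k, -, hk⟩ := this
  have h1 : (k : ℕ) - i ≤ l1 X := le_l1 (left_ne_zero_of_mul hk)
  have h2 : (j : ℕ) - k ≤ l1 Y := le_l1 (right_ne_zero_of_mul hk)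
  omega

lemma l2_mul_le {n : ℕ} (X Y : Matrix (Fin n) (Fin n) ℂ) :
    l2 (X * Y) ≤ l2 X + l2 Y := by
  rw [l2_le_iff]
  intro i j h
  have : ∃ k ∈ Finset.univ, X i k * Y k j ≠ 0 := by
    apply Finset.exists_ne_zero_of_sum_ne_zero
    simpa [Matrix.mul_apply] using h
  obtain ⟨k, -, hk⟩ := this
  have h1 : (i : ℕ) - k ≤ l2 X := le_l2 (left_ne_zero_of_mul hk)
  have h2 : (k : ℕ) - j ≤ l2 Y := le_l2 (right_ne_zero_of_mul hk)
  omega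

lemma l1_pow_le {n : ℕ} (X : Matrix (Fin n) (Fin n) ℂ) (k : ℕ) :
    l1 (X ^ k) ≤ k * l1 X := by
  induction k with
  | zero =>
    rw [pow_zero, l1_le_iff]
    intro i j h
    have : i = j := by
      by_contra hne
      exact h (Matrix.one_apply_ne hne)
    omega
  | succ k ih =>
    rw [pow_succ]
    calc l1 (X ^ k * X) ≤ l1 (X ^ k) + l1 X := l1_mul_le _ _
      _ ≤ k * l1 X + l1 X := by omega
      _ = (k + 1) * l1 X := by ring

lemma l2_pow_le {n : ℕ} (X : Matrix (Fin n) (Fin n) ℂ) (k : ℕ) :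
    l2 (X ^ k) ≤ k * l2 X := by
  induction k with
  | zero =>
    rw [pow_zero, l2_le_iff]
    intro i j h
    have : i = j := by
      by_contra hne
      exact h (Matrix.one_apply_ne hne)
    omega
  | succ k ih =>
    rw [pow_succ]
    calc l2 (X ^ k * X) ≤ l2 (X ^ k) + l2 X := l2_mul_le _ _
      _ ≤ k * l2 X + l2 X := by omega
      _ = (k + 1) * l2 X := by ring

lemma bw_poly_le {n : ℕ} (m : ℕ) (c : ℕ → ℂ) (X : Matrix (Fin n) (Fin n) ℂ) :
    bw (∑ i ∈ Finset.range (m + 1), c i • X ^ i) ≤ m * bw X := by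
  set S := ∑ i ∈ Finset.range (m + 1), c i • X ^ i with hS
  have key : ∀ i j : Fin n, S i j ≠ 0 →
      (j : ℕ) - i ≤ m * l1 X ∧ (i : ℕ) - j ≤ m * l2 X := by
    intro i j h
    have : ∃ k ∈ Finset.range (m + 1), (c k • X ^ k) i j ≠ 0 := by
      apply Finset.exists_ne_zero_of_sum_ne_zero
      simpa [hS, Matrix.sum_apply] using h
    obtain ⟨k, hk, hne⟩ := this
    have hXk : (X ^ k) i j ≠ 0 := by
      intro hz
      apply hne
      simp [Matrix.smul_apply, hz]
    have hkm : k ≤ m := by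
      simpa [Nat.lt_succ_iff] using Finset.mem_range.mp hk
    constructor
    · calc (j : ℕ) - i ≤ l1 (X ^ k) := le_l1 hXk
        _ ≤ k * l1 X := l1_pow_le _ _
        _ ≤ m * l1 X := Nat.mul_le_mul_right _ hkm
    · calc (i : ℕ) - j ≤ l2 (X ^ k) := le_l2 hXk
        _ ≤ k * l2 X := l2_pow_le _ _
        _ ≤ m * l2 X := Nat.mul_le_mul_right _ hkm
  have h1 : l1 S ≤ m * l1 X := l1_le_iff.mpr fun i j h => (key i j h).1
  have h2 : l2 S ≤ m * l2 X := l2_le_iff.mpr fun i j h => (key i j h).2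
  unfold bw
  have : m * (l1 X + l2 X) = m * l1 X + m * l2 X := by ring
  omega

lemma lam_le_bw_submatrix {n : ℕ} (X : Matrix (Fin n) (Fin n) ℂ) (σ : Equiv.Perm (Fin n)) :
    lam X ≤ bw (X.submatrix σ σ) :=
  Nat.sInf_le ⟨σ, rfl⟩

lemma exists_lam_eq {n : ℕ} (X : Matrix (Fin n) (Fin n) ℂ) :
    ∃ σ : Equiv.Perm (Fin n), bw (X.submatrix σ σ) = lam X := by
  have hne : {m | ∃ σ : Equiv.Perm (Fin n), bw (X.submatrix σ σ) = m}.Nonempty :=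
    ⟨bw (X.submatrix (Equiv.refl (Fin n)) (Equiv.refl (Fin n))), Equiv.refl (Fin n), rfl⟩
  exact Nat.sInf_mem hne

lemma submatrix_poly {n : ℕ} (m : ℕ) (c : ℕ → ℂ) (X : Matrix (Fin n) (Fin n) ℂ)
    (σ : Equiv.Perm (Fin n)) :
    (∑ i ∈ Finset.range (m + 1), c i • X ^ i).submatrix σ σ
      = ∑ i ∈ Finset.range (m + 1), c i • (X.submatrix σ σ) ^ i := by
  have hrw : ∀ Y : Matrix (Fin n) (Fin n) ℂ,
      Y.submatrix σ σ = Matrix.reindexAlgEquiv ℂ ℂ σ.symm Y := by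
    intro Y
    simp [Matrix.reindexAlgEquiv_apply, Matrix.reindex_apply]
  rw [hrw, map_sum]
  refine Finset.sum_congr rfl fun i _ => ?_
  rw [map_smul, map_pow, ← hrw]

lemma lam_poly_le {n : ℕ} (m : ℕ) (c : ℕ → ℂ) (X : Matrix (Fin n) (Fin n) ℂ) :
    lam (∑ i ∈ Finset.range (m + 1), c i • X ^ i) ≤ m * lam X := by
  obtain ⟨σ, hσ⟩ := exists_lam_eq X
  calc lam (∑ i ∈ Finset.range (m + 1), c i • X ^ i)
      ≤ bw ((∑ i ∈ Finset.range (m + 1), c i • X ^ i).submatrix σ σ) :=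
        lam_le_bw_submatrix _ σ
    _ = bw (∑ i ∈ Finset.range (m + 1), c i • (X.submatrix σ σ) ^ i) := by
        rw [submatrix_poly]
    _ ≤ m * bw (X.submatrix σ σ) := bw_poly_le m c _
    _ = m * lam X := by rw [hσ]

/-- Corollary 3.6: if `B` achieves the `ε`-bandwidth of `A`, i.e. `β(ε,A) = λ(A-B)`
with `‖B‖ ≤ ε‖A‖`, then `β(ε_p, p_m(A)) ≤ m·β(ε, A)` where
`ε_p = ‖p_m(A) - p_m(A-B)‖ / ‖p_m(A)‖`. -/
theorem beta_poly_le_beta {n : ℕ} (A B : Matrix (Fin n) (Fin n) ℂ) (ε : ℝ) (hε : 0 < ε)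
    (m : ℕ) (c : ℕ → ℂ)
    (p : Matrix (Fin n) (Fin n) ℂ → Matrix (Fin n) (Fin n) ℂ)
    (hp : ∀ X, p X = ∑ i ∈ Finset.range (m + 1), c i • X ^ i)
    (hB : ‖B‖ ≤ ε * ‖A‖) (hach : beta ε A = lam (A - B))
    (hpA : p A ≠ 0) :
    beta (‖p A - p (A - B)‖ / ‖p A‖) (p A) ≤ m * beta ε A := by
  have hnorm : ‖p A‖ ≠ 0 := norm_ne_zero_iff.mpr hpA
  have hmem : lam (p (A - B)) ∈
      {k | ∃ B' : Matrix (Fin n) (Fin n) ℂ,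
        ‖B'‖ ≤ (‖p A - p (A - B)‖ / ‖p A‖) * ‖p A‖ ∧ lam (p A - B') = k} := by
    refine ⟨p A - p (A - B), ?_, ?_⟩
    · rw [div_mul_cancel₀ _ hnorm]
    · rw [sub_sub_cancel]
  have h1 : beta (‖p A - p (A - B)‖ / ‖p A‖) (p A) ≤ lam (p (A - B)) :=
    Nat.sInf_le hmem
  have h2 : lam (p (A - B)) ≤ m * lam (A - B) := by
    rw [hp]
    exact lam_poly_le m c (A - B)
  rw [hach]
  omega
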